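/- arXiv:1507.05816 — 6 statements merged into one kernel-verified Lean document; each statement's English description precedes it below -/
import Mathlib

section
/- If B is a 𝔹ℂ-balanced subset of a 𝔹ℂ-module X, then e₁B and e₂B are balanced sets in the ℂ(i)-vector spaces e₁X and e₂X respectively, and moreover e₁B ⊆ B and e₂B ⊆ B. -/
noncomputable section

abbrev BC : Type := ℂ × ℂ
abbrev Hyp : Type := ℝ × ℝ

def BC.e1 : BC := (1, 0)
def BC.e2 : BC := (0, 1)

def normK (z : BC) : Hyp := (‖z.1‖, ‖z.2‖)

def hypToBC (l : Hyp) : BC := ((l.1 : ℂ), (l.2 : ℂ))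

def embedC (c : ℂ) : BC := (c, c)

def ltH (a b : Hyp) : Prop := a.1 < b.1 ∧ a.2 < b.2

def absH (a : Hyp) : Hyp := (|a.1|, |a.2|)

def BCBalanced {X : Type*} [AddCommGroup X] [Module BC X] (B : Set X) : Prop :=
  ∀ l : BC, normK l ≤ 1 → ∀ x ∈ B, l • x ∈ B

def BCConvex {X : Type*} [AddCommGroup X] [Module BC X] (B : Set X) : Prop :=
  ∀ x ∈ B, ∀ y ∈ B, ∀ l : Hyp, 0 ≤ l → l ≤ 1 →
    hypToBC l • x + hypToBC (1 - l) • y ∈ B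

def BCAbsorbing {X : Type*} [AddCommGroup X] [Module BC X] (B : Set X) : Prop :=
  ∀ x : X, ∃ ε : Hyp, (0 < ε.1 ∧ 0 < ε.2) ∧
    ∀ l : Hyp, 0 ≤ l → l ≤ ε → hypToBC l • x ∈ B

def CxConvex {X : Type*} [AddCommGroup X] [Module BC X] (S : Set X) : Prop :=
  ∀ x ∈ S, ∀ y ∈ S, ∀ t : ℝ, 0 ≤ t → t ≤ 1 →
    embedC (t : ℂ) • x + embedC ((1 - t : ℝ) : ℂ) • y ∈ S

def idemSum {X : Type*} [AddCommGroup X] [Module BC X] (B : Set X) : Set X :=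
  Set.image2 (fun b b' => BC.e1 • b + BC.e2 • b') B B

def IsDSeminorm {X : Type*} [AddCommGroup X] [Module BC X] (p : X → Hyp) : Prop :=
  (∀ l : BC, ∀ x : X, p (l • x) = normK l * p x) ∧
  (∀ x y : X, p (x + y) ≤ p x + p y)

def gaugeD {X : Type*} [AddCommGroup X] [Module BC X] (B : Set X) (x : X) : Hyp :=
  (sInf (Prod.fst '' {α : Hyp | (0 < α.1 ∧ 0 < α.2) ∧ x ∈ (fun b => hypToBC α • b) '' B}),
   sInf (Prod.snd '' {α : Hyp | (0 < α.1 ∧ 0 < α.2) ∧ x ∈ (fun b => hypToBC α • b) '' B}))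

/-! Since 𝔹ℂ is commutative, multiplication by any `s : 𝔹ℂ` commutes with the scalar action,
so `s • B` is 𝔹ℂ-balanced with `B`; a complex `a` with `|a| ≤ 1` acts as `embedC a`, whose
hyperbolic modulus is `(|a|, |a|) ≤ 1`, and `|eᵢ|_k ≤ 1` gives `eᵢ • B ⊆ B`. -/

theorem normK_embedC_le_one {a : ℂ} (ha : ‖a‖ ≤ 1) : normK (embedC a) ≤ 1 :=
  ⟨ha, ha⟩

theorem normK_e1_le_one : normK BC.e1 ≤ 1 := by
  constructor <;> simp [normK, BC.e1]

theorem normK_e2_le_one : normK BC.e2 ≤ 1 := by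
  constructor <;> simp [normK, BC.e2]

section

variable {X : Type*} [AddCommGroup X] [Module BC X] {B : Set X}

theorem BCBalanced.image_smul (hB : BCBalanced B) (s : BC) :
    BCBalanced ((fun x => s • x) '' B) := by
  rintro l hl _ ⟨b, hb, rfl⟩
  exact ⟨l • b, hB l hl b hb, smul_comm s l b⟩

theorem BCBalanced.image_smul_subset (hB : BCBalanced B) {s : BC} (hs : normK s ≤ 1) :
    (fun x => s • x) '' B ⊆ B := by
  rintro _ ⟨b, hb, rfl⟩
  exact hB s hs b hb

end

theorem balanced_idempotent_parts {X : Type*} [AddCommGroup X] [Module BC X] (B : Set X)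
    (hB : BCBalanced B) :
    (∀ a : ℂ, ‖a‖ ≤ 1 → ∀ x ∈ (fun x => BC.e1 • x) '' B,
        embedC a • x ∈ (fun x => BC.e1 • x) '' B) ∧
    (∀ a : ℂ, ‖a‖ ≤ 1 → ∀ x ∈ (fun x => BC.e2 • x) '' B,
        embedC a • x ∈ (fun x => BC.e2 • x) '' B) ∧
    (fun x => BC.e1 • x) '' B ⊆ B ∧ (fun x => BC.e2 • x) '' B ⊆ B :=
  ⟨fun _ ha => hB.image_smul BC.e1 _ (normK_embedC_le_one ha),
    fun _ ha => hB.image_smul BC.e2 _ (normK_embedC_le_one ha),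
    hB.image_smul_subset normK_e1_le_one, hB.image_smul_subset normK_e2_le_one⟩
end
end

section
/- If B is a 𝔹ℂ-convex subset of a 𝔹ℂ-module X, then B = e₁B + e₂B. -/
noncomputable section

theorem BC.e1_add_e2 : BC.e1 + BC.e2 = 1 := by
  simp [BC.e1, BC.e2, Prod.ext_iff]

theorem hypToBC_one_zero : hypToBC (1, 0) = BC.e1 := by
  simp [hypToBC, BC.e1]

theorem hypToBC_one_sub_one_zero : hypToBC (1 - (1, 0)) = BC.e2 := by
  simp [hypToBC, BC.e2]

section

variable {X : Type*} [AddCommGroup X] [Module BC X]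

theorem e1_smul_add_e2_smul (x : X) : BC.e1 • x + BC.e2 • x = x := by
  rw [← add_smul, BC.e1_add_e2, one_smul]

theorem subset_idemSum (B : Set X) : B ⊆ idemSum B :=
  fun x hx => ⟨x, hx, x, hx, e1_smul_add_e2_smul x⟩

theorem BCConvex.idemSum_subset {B : Set X} (hB : BCConvex B) : idemSum B ⊆ B := by
  rintro _ ⟨b, hb, b', hb', rfl⟩
  have hmem := hB b hb b' hb' (1, 0) (by constructor <;> norm_num) (by constructor <;> norm_num)
  rwa [hypToBC_one_zero, hypToBC_one_sub_one_zero] at hmem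

end

theorem bcConvex_eq_idemSum {X : Type*} [AddCommGroup X] [Module BC X] (B : Set X)
    (hB : BCConvex B) : B = idemSum B :=
  (subset_idemSum B).antisymm hB.idemSum_subset
end
end

section
/- If X is a 𝔹ℂ-module and B ⊆ X is such that e₁B and e₂B are convex sets in the ℂ(i)-vector spaces e₁X and e₂X respectively, then e₁B + e₂B is a 𝔹ℂ-convex subset of X. -/
noncomputable section

/-! On `e₁X` a hyperbolic scalar `l = (l₁, l₂)` acts as the real number `l₁`, and on `e₂X` as `l₂`.
Hence a 𝔹ℂ-convex combination of `e₁a + e₂a'` and `e₁b + e₂b'` splits into an ordinary convex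
combination in `e₁X` with weight `l₁` plus one in `e₂X` with weight `l₂`, and each lies in the
corresponding convex part. -/

lemma hypToBC_mul_e1 (l : Hyp) : hypToBC l * BC.e1 = embedC (l.1 : ℂ) * BC.e1 := by
  simp [hypToBC, embedC, BC.e1]

lemma hypToBC_mul_e2 (l : Hyp) : hypToBC l * BC.e2 = embedC (l.2 : ℂ) * BC.e2 := by
  simp [hypToBC, embedC, BC.e2]

lemma hypToBC_smul_e1_add_e2 {X : Type*} [AddCommGroup X] [Module BC X] (l : Hyp) (a a' : X) :
    hypToBC l • (BC.e1 • a + BC.e2 • a') =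
      embedC (l.1 : ℂ) • BC.e1 • a + embedC (l.2 : ℂ) • BC.e2 • a' := by
  rw [smul_add, smul_smul, smul_smul, hypToBC_mul_e1, hypToBC_mul_e2, mul_smul, mul_smul]

lemma hypToBC_combination_e1_add_e2 {X : Type*} [AddCommGroup X] [Module BC X] (l : Hyp)
    (a a' b b' : X) :
    hypToBC l • (BC.e1 • a + BC.e2 • a') + hypToBC (1 - l) • (BC.e1 • b + BC.e2 • b') =
      (embedC (l.1 : ℂ) • BC.e1 • a + embedC ((1 - l.1 : ℝ) : ℂ) • BC.e1 • b) +
        (embedC (l.2 : ℂ) • BC.e2 • a' + embedC ((1 - l.2 : ℝ) : ℂ) • BC.e2 • b') := by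
  rw [hypToBC_smul_e1_add_e2, hypToBC_smul_e1_add_e2, Prod.fst_sub, Prod.snd_sub, Prod.fst_one,
    Prod.snd_one, add_add_add_comm]

theorem idemSum_bcConvex_of_parts_convex {X : Type*} [AddCommGroup X] [Module BC X]
    (B : Set X)
    (h1 : CxConvex ((fun x => BC.e1 • x) '' B))
    (h2 : CxConvex ((fun x => BC.e2 • x) '' B)) :
    BCConvex (idemSum B) := by
  rintro _ ⟨a, ha, a', ha', rfl⟩ _ ⟨b, hb, b', hb', rfl⟩ l hl0 hl1
  obtain ⟨c, hc, hc_eq⟩ := h1 _ ⟨a, ha, rfl⟩ _ ⟨b, hb, rfl⟩ l.1 hl0.1 hl1.1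
  obtain ⟨c', hc', hc'_eq⟩ := h2 _ ⟨a', ha', rfl⟩ _ ⟨b', hb', rfl⟩ l.2 hl0.2 hl1.2
  refine ⟨c, hc, c', hc', ?_⟩
  rw [hypToBC_combination_e1_add_e2, ← hc_eq, ← hc'_eq]
end
end

section
/- If B is a 𝔹ℂ-absorbing subset of a 𝔹ℂ-module X, then e₁B and e₂B are absorbing sets in the ℂ(i)-vector spaces e₁X and e₂X respectively. -/
noncomputable section

theorem BC.e1_mul_hypToBC (l : Hyp) : BC.e1 * hypToBC l = embedC l.1 * BC.e1 := by
  simp [BC.e1, hypToBC, embedC]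

theorem BC.e2_mul_hypToBC (l : Hyp) : BC.e2 * hypToBC l = embedC l.2 * BC.e2 := by
  simp [BC.e2, hypToBC, embedC]

section

variable {X : Type*} [AddCommGroup X] [Module BC X] {B : Set X}

theorem BCAbsorbing.smul_e1_mem_image (hB : BCAbsorbing B) (x : X) :
    ∃ ε : ℝ, 0 < ε ∧ ∀ t : ℝ, 0 ≤ t → t ≤ ε → embedC t • BC.e1 • x ∈ (BC.e1 • ·) '' B := by
  obtain ⟨ε, ⟨hε₁, hε₂⟩, hε⟩ := hB x
  -- `e₁` annihilates the second idempotent component, so `λ = (t, 0)` suffices.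
  refine ⟨ε.1, hε₁, fun t ht₀ htε => ⟨hypToBC (t, 0) • x, hε (t, 0) ⟨ht₀, le_rfl⟩ ⟨htε, hε₂.le⟩, ?_⟩⟩
  simp only [smul_smul, BC.e1_mul_hypToBC]

theorem BCAbsorbing.smul_e2_mem_image (hB : BCAbsorbing B) (x : X) :
    ∃ ε : ℝ, 0 < ε ∧ ∀ t : ℝ, 0 ≤ t → t ≤ ε → embedC t • BC.e2 • x ∈ (BC.e2 • ·) '' B := by
  obtain ⟨ε, ⟨hε₁, hε₂⟩, hε⟩ := hB x
  refine ⟨ε.2, hε₂, fun t ht₀ htε => ⟨hypToBC (0, t) • x, hε (0, t) ⟨le_rfl, ht₀⟩ ⟨hε₁.le, htε⟩, ?_⟩⟩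
  simp only [smul_smul, BC.e2_mul_hypToBC]

end

theorem absorbing_idempotent_parts {X : Type*} [AddCommGroup X] [Module BC X]
    (B : Set X) (hB : BCAbsorbing B) :
    (∀ x : X, ∃ ε : ℝ, 0 < ε ∧ ∀ t : ℝ, 0 ≤ t → t ≤ ε →
        embedC (t : ℂ) • (BC.e1 • x) ∈ (fun y => BC.e1 • y) '' B) ∧
    (∀ x : X, ∃ ε : ℝ, 0 < ε ∧ ∀ t : ℝ, 0 ≤ t → t ≤ ε →
        embedC (t : ℂ) • (BC.e2 • x) ∈ (fun y => BC.e2 • y) '' B) :=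
  ⟨hB.smul_e1_mem_image, hB.smul_e2_mem_image⟩
end
end

section
/- Every neighbourhood of 0 in a topological 𝔹ℂ-module is 𝔹ℂ-absorbing, and every neighbourhood of 0 contains a 𝔹ℂ-balanced neighbourhood of 0. -/
noncomputable section

/-!
Absorbency: the preimage of `U` under `l ↦ hypToBC l • x` is a neighbourhood of `0` in `ℝ × ℝ`,
hence contains an order box `[0, ε]` with `ε > 0` in both coordinates.

Balancedness: the hyperbolic condition `normK l ≤ 1` says that the sup norm of `l ∈ ℂ × ℂ` is at
most `1`, so it suffices to show that the balanced core of `U` for this normed ring is a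
neighbourhood of `0`. Continuity of `(a, x) ↦ a • x` at `(0, 0)` gives `ball 0 r • V ⊆ U`; this set
is balanced because the norm is submultiplicative, and it contains `c • V` for a small real, hence
invertible, scalar `c`.
-/

open Filter Topology Set Metric
open scoped Pointwise

theorem exists_Icc_subset_of_mem_nhds_prod {α β : Type*}
    [TopologicalSpace α] [LinearOrder α] [OrderTopology α] [NoMaxOrder α] [DenselyOrdered α]
    [TopologicalSpace β] [LinearOrder β] [OrderTopology β] [NoMaxOrder β] [DenselyOrdered β]
    {a : α × β} {s : Set (α × β)} (hs : s ∈ 𝓝 a) :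
    ∃ b : α × β, (a.1 < b.1 ∧ a.2 < b.2) ∧ Icc a b ⊆ s := by
  rw [nhds_prod_eq] at hs
  obtain ⟨s₁, hs₁, s₂, hs₂, hsub⟩ := mem_prod_iff.1 hs
  obtain ⟨u, hu, hus₁⟩ := mem_nhdsGE_iff_exists_Icc_subset.1 (mem_nhdsWithin_of_mem_nhds hs₁)
  obtain ⟨v, hv, hvs₂⟩ := mem_nhdsGE_iff_exists_Icc_subset.1 (mem_nhdsWithin_of_mem_nhds hs₂)
  refine ⟨(u, v), ⟨hu, hv⟩, ?_⟩
  rw [Icc_prod_eq]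
  exact (prod_mono hus₁ hvs₂).trans hsub

theorem Balanced.set_smul {𝕜 E : Type*} [SeminormedRing 𝕜] [MulAction 𝕜 E] {B : Set 𝕜}
    (hB : Balanced 𝕜 B) (t : Set E) : Balanced 𝕜 (B • t) := by
  rintro a ha _ ⟨_, ⟨b, hb, x, hx, rfl⟩, rfl⟩
  exact ⟨a • b, hB a ha (smul_mem_smul_set hb), x, hx, smul_assoc a b x⟩

theorem balanced_ball_zero_of_isBoundedSMul {𝕜 E : Type*} [SeminormedRing 𝕜]
    [SeminormedAddCommGroup E] [Module 𝕜 E] [IsBoundedSMul 𝕜 E] (r : ℝ) :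
    Balanced 𝕜 (ball (0 : E) r) := by
  rintro a ha _ ⟨x, hx, rfl⟩
  rw [mem_ball_zero_iff] at hx ⊢
  calc ‖a • x‖ ≤ ‖a‖ * ‖x‖ := norm_smul_le a x
    _ ≤ 1 * ‖x‖ := by gcongr
    _ < r := by rwa [one_mul]

theorem NormedAlgebra.exists_isUnit_norm_lt (𝕜 : Type*) [NormedRing 𝕜] [NormedAlgebra ℝ 𝕜]
    {r : ℝ} (hr : 0 < r) : ∃ c : 𝕜, IsUnit c ∧ ‖c‖ < r := by
  have hlim : Tendsto (algebraMap ℝ 𝕜) (𝓝[≠] 0) (𝓝 0) := by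
    simpa using ((continuous_algebraMap ℝ 𝕜).tendsto 0).mono_left nhdsWithin_le_nhds
  obtain ⟨t, ht, ht0⟩ := ((hlim.eventually (ball_mem_nhds 0 hr)).and self_mem_nhdsWithin).exists
  exact ⟨algebraMap ℝ 𝕜 t, (isUnit_iff_ne_zero.2 ht0).map _, by simpa using ht⟩

theorem balancedCore_mem_nhds_zero_of_normedAlgebra {𝕜 E : Type*} [NormedRing 𝕜]
    [NormedAlgebra ℝ 𝕜] [AddCommGroup E] [Module 𝕜 E] [TopologicalSpace E] [ContinuousSMul 𝕜 E]
    {U : Set E} (hU : U ∈ 𝓝 0) : balancedCore 𝕜 U ∈ 𝓝 0 := by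
  obtain ⟨W, hW, V, hV, hWV⟩ :
      ∃ W ∈ 𝓝 (0 : 𝕜), ∃ V ∈ 𝓝 (0 : E), W ×ˢ V ⊆ (fun p => p.1 • p.2) ⁻¹' U := by
    rw [← mem_prod_iff, ← nhds_prod_eq]
    exact continuous_smul.continuousAt.preimage_mem_nhds (by simpa using hU)
  obtain ⟨r, hr, hrW⟩ := Metric.mem_nhds_iff.1 hW
  obtain ⟨c, hc, hcr⟩ := NormedAlgebra.exists_isUnit_norm_lt 𝕜 hr
  have hball : ball (0 : 𝕜) r • V ⊆ U :=
    image2_subset_iff.2 fun a ha x hx => hWV (mk_mem_prod (hrW ha) hx)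
  have hcV : c • V ∈ 𝓝 (0 : E) := by
    simpa using (hc.smul_mem_nhds_smul_iff (a := (0 : E))).2 hV
  have hc_mem : c ∈ ball (0 : 𝕜) r := by simpa using hcr
  exact mem_of_superset hcV <| (smul_set_subset_smul hc_mem).trans <|
    ((balanced_ball_zero_of_isBoundedSMul r).set_smul V).subset_balancedCore_of_subset hball

theorem continuous_hypToBC : Continuous hypToBC := by
  unfold hypToBC
  fun_prop

@[simp]
theorem hypToBC_zero : hypToBC 0 = 0 := by
  ext <;> simp [hypToBC]

theorem normK_le_one_iff {l : BC} : normK l ≤ 1 ↔ ‖l‖ ≤ 1 := by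
  simp [normK, Prod.le_def, Prod.norm_def]

theorem Balanced.bcBalanced {X : Type*} [AddCommGroup X] [Module BC X] {B : Set X}
    (hB : Balanced BC B) : BCBalanced B :=
  fun _ hl _ hx => hB.smul_mem (normK_le_one_iff.1 hl) hx

theorem bcAbsorbing_of_mem_nhds_zero {X : Type*} [AddCommGroup X] [Module BC X]
    [TopologicalSpace X] [ContinuousSMul BC X] {U : Set X} (hU : U ∈ 𝓝 0) : BCAbsorbing U := by
  intro x
  have hpre : (fun l : Hyp => hypToBC l • x) ⁻¹' U ∈ 𝓝 0 :=
    (continuous_hypToBC.smul continuous_const).continuousAt.preimage_mem_nhds (by simpa using hU)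
  obtain ⟨ε, hε, hεU⟩ := exists_Icc_subset_of_mem_nhds_prod hpre
  exact ⟨ε, hε, fun l hl0 hlε => hεU ⟨hl0, hlε⟩⟩

theorem nhds_zero_absorbing_and_balanced_general {X : Type*} [AddCommGroup X] [Module BC X]
    [TopologicalSpace X] [ContinuousSMul BC X]
    (U : Set X) (hU : U ∈ nhds (0 : X)) :
    BCAbsorbing U ∧ ∃ V ∈ nhds (0 : X), BCBalanced V ∧ V ⊆ U :=
  ⟨bcAbsorbing_of_mem_nhds_zero hU, balancedCore BC U,
    balancedCore_mem_nhds_zero_of_normedAlgebra hU, (balancedCore_balanced U).bcBalanced,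
    balancedCore_subset U⟩

theorem nhds_zero_absorbing_and_balanced {X : Type*} [AddCommGroup X] [Module BC X]
    [TopologicalSpace X] [T2Space X] [ContinuousAdd X] [ContinuousSMul BC X]
    (U : Set X) (hU : U ∈ nhds (0 : X)) :
    BCAbsorbing U ∧ ∃ V ∈ nhds (0 : X), BCBalanced V ∧ V ⊆ U :=
  nhds_zero_absorbing_and_balanced_general U hU
end
end

section
/- Let X be a topological 𝔹ℂ-module, B a 𝔹ℂ-convex, 𝔹ℂ-balanced, 𝔹ℂ-absorbing subset, and q_B its hyperbolic-valued Minkowski functional. Set A_B = {x : q_B(x) <' 1} and C_B = {x : q_B(x) ≤' 1}. Then B° ⊆ A_B ⊆ B ⊆ C_B ⊆ cl(B); if B is open then B = A_B; if B is closed then B = C_B. -/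
noncomputable section

/-!
Write `S(x) = {α >' 0 : x ∈ αB}`, so that `q_B(x)` is the pair of infima of the two coordinates
of `S(x)`, and `α ∈ S(x)` iff `α⁻¹x ∈ B`. Balancedness makes `S(x)` upward closed, and convexity
with the idempotent weight `(1, 0)` lets one combine the first coordinate of one element of `S(x)`
with the second coordinate of another, so the two coordinatewise infima are approached
simultaneously: every `r >' q_B(x)` lies in `S(x)`. With `r = 1` this gives `A_B ⊆ B`; with
`r = (t⁻¹, t⁻¹)`, `0 < t < 1`, it gives `t x ∈ B`, and letting `t → 1` puts `C_B` inside the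
closure. Conversely, if `x` is interior then `s x ∈ B` for some real `s > 1` by continuity, so
`q_B(x) ≤' s⁻¹ <' 1`.
-/

lemma hypToBC_mul (a b : Hyp) : hypToBC (a * b) = hypToBC a * hypToBC b := by
  simp [hypToBC]

lemma hypToBC_one : hypToBC 1 = 1 := by
  simp [hypToBC, Prod.ext_iff]

lemma hypToBC_smul_hypToBC_smul {X : Type*} [AddCommGroup X] [Module BC X]
    (a b : Hyp) (x : X) : hypToBC a • hypToBC b • x = hypToBC (a * b) • x := by
  rw [smul_smul, hypToBC_mul]

lemma normK_hypToBC_le_one {a : Hyp} (h0 : 0 ≤ a) (h1 : a ≤ 1) : normK (hypToBC a) ≤ 1 := by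
  simp only [normK, hypToBC, Complex.norm_real, Real.norm_eq_abs, abs_of_nonneg h0.1,
    abs_of_nonneg h0.2]
  exact h1

lemma Hyp.mul_inv_cancel {a : Hyp} (ha : ltH 0 a) : a * a⁻¹ = 1 :=
  Prod.ext (mul_inv_cancel₀ ha.1.ne') (mul_inv_cancel₀ ha.2.ne')

lemma continuous_hypToBC_diag_smul {X : Type*} [AddCommGroup X] [Module BC X]
    [TopologicalSpace X] [ContinuousSMul BC X] (x : X) :
    Continuous fun t : ℝ => hypToBC (t, t) • x :=
  (Complex.continuous_ofReal.prodMk Complex.continuous_ofReal).smul continuous_const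

def gaugeSet {X : Type*} [AddCommGroup X] [Module BC X] (B : Set X) (x : X) : Set Hyp :=
  {α : Hyp | (0 < α.1 ∧ 0 < α.2) ∧ x ∈ (fun b => hypToBC α • b) '' B}

namespace gaugeSet

variable {X : Type*} [AddCommGroup X] [Module BC X] {B : Set X} {x : X}

lemma mem_iff {α : Hyp} : α ∈ gaugeSet B x ↔ ltH 0 α ∧ hypToBC α⁻¹ • x ∈ B := by
  refine ⟨fun ⟨hα, b, hb, hbx⟩ => ⟨hα, ?_⟩, fun ⟨hα, hx⟩ => ⟨hα, _, hx, ?_⟩⟩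
  · rwa [← hbx, hypToBC_smul_hypToBC_smul, mul_comm, Hyp.mul_inv_cancel hα, hypToBC_one,
      one_smul]
  · simp only [hypToBC_smul_hypToBC_smul, Hyp.mul_inv_cancel hα, hypToBC_one, one_smul]

lemma gaugeD_le (a : Hyp) (ha : a ∈ gaugeSet B x) : gaugeD B x ≤ a :=
  ⟨csInf_le ⟨0, by rintro _ ⟨b, hb, rfl⟩; exact hb.1.1.le⟩ ⟨a, ha, rfl⟩,
    csInf_le ⟨0, by rintro _ ⟨b, hb, rfl⟩; exact hb.1.2.le⟩ ⟨a, ha, rfl⟩⟩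

lemma nonempty (habs : BCAbsorbing B) (x : X) : (gaugeSet B x).Nonempty := by
  obtain ⟨ε, hε, hεx⟩ := habs x
  refine ⟨ε⁻¹, mem_iff.2 ⟨⟨inv_pos.2 hε.1, inv_pos.2 hε.2⟩, ?_⟩⟩
  rw [inv_inv]
  exact hεx ε ⟨hε.1.le, hε.2.le⟩ le_rfl

lemma mem_of_le (hbal : BCBalanced B) {a b : Hyp} (ha : a ∈ gaugeSet B x) (hb : ltH 0 b)
    (hab : a ≤ b) : b ∈ gaugeSet B x := by
  obtain ⟨ha0, hax⟩ := mem_iff.1 ha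
  refine mem_iff.2 ⟨hb, ?_⟩
  have hscale : normK (hypToBC (a * b⁻¹)) ≤ 1 :=
    normK_hypToBC_le_one
      ⟨mul_nonneg ha0.1.le (inv_nonneg.2 hb.1.le), mul_nonneg ha0.2.le (inv_nonneg.2 hb.2.le)⟩
      ⟨mul_inv_le_one_of_le₀ hab.1 hb.1.le, mul_inv_le_one_of_le₀ hab.2 hb.2.le⟩
  have := hbal _ hscale _ hax
  rwa [hypToBC_smul_hypToBC_smul, mul_right_comm, Hyp.mul_inv_cancel ha0, one_mul] at this

lemma mk_fst_snd_mem (hconv : BCConvex B) {a b : Hyp} (ha : a ∈ gaugeSet B x)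
    (hb : b ∈ gaugeSet B x) : (a.1, b.2) ∈ gaugeSet B x := by
  obtain ⟨ha0, hax⟩ := mem_iff.1 ha
  obtain ⟨hb0, hbx⟩ := mem_iff.1 hb
  refine mem_iff.2 ⟨⟨ha0.1, hb0.2⟩, ?_⟩
  have := hconv _ hax _ hbx (1, 0) ⟨zero_le_one, le_rfl⟩ ⟨le_rfl, zero_le_one⟩
  rw [hypToBC_smul_hypToBC_smul, hypToBC_smul_hypToBC_smul, ← add_smul] at this
  convert this using 2
  ext <;> simp [hypToBC]

lemma exists_ltH (habs : BCAbsorbing B) (hconv : BCConvex B) {r : Hyp}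
    (hr : ltH (gaugeD B x) r) : ∃ a ∈ gaugeSet B x, ltH a r := by
  obtain ⟨_, ⟨a, ha, rfl⟩, ha1⟩ := exists_lt_of_csInf_lt ((nonempty habs x).image Prod.fst) hr.1
  obtain ⟨_, ⟨b, hb, rfl⟩, hb2⟩ := exists_lt_of_csInf_lt ((nonempty habs x).image Prod.snd) hr.2
  exact ⟨(a.1, b.2), mk_fst_snd_mem hconv ha hb, ha1, hb2⟩

lemma mem_of_gaugeD_ltH (habs : BCAbsorbing B) (hconv : BCConvex B) (hbal : BCBalanced B)
    {r : Hyp} (hr : ltH (gaugeD B x) r) : r ∈ gaugeSet B x := by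
  obtain ⟨a, ha, har⟩ := exists_ltH habs hconv hr
  exact mem_of_le hbal ha ⟨ha.1.1.trans har.1, ha.1.2.trans har.2⟩ ⟨har.1.le, har.2.le⟩

end gaugeSet

section Inclusions

open Filter Topology

variable {X : Type*} [AddCommGroup X] [Module BC X] {B : Set X}

lemma subset_gaugeD_le_one : B ⊆ {x : X | gaugeD B x ≤ 1} := fun x hx =>
  gaugeSet.gaugeD_le 1 (gaugeSet.mem_iff.2 ⟨⟨one_pos, one_pos⟩, by simpa [hypToBC_one] using hx⟩)

lemma gaugeD_ltH_one_subset (habs : BCAbsorbing B) (hconv : BCConvex B) (hbal : BCBalanced B) :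
    {x : X | ltH (gaugeD B x) 1} ⊆ B := fun _ hx => by
  simpa [hypToBC_one] using (gaugeSet.mem_iff.1 (gaugeSet.mem_of_gaugeD_ltH habs hconv hbal hx)).2

variable [TopologicalSpace X] [ContinuousSMul BC X]

lemma interior_subset_gaugeD_ltH_one : interior B ⊆ {x : X | ltH (gaugeD B x) 1} := by
  intro x hx
  have hB : ∀ᶠ s in 𝓝 (1 : ℝ), hypToBC (s, s) • x ∈ B := by
    have h1 : hypToBC ((1 : ℝ), (1 : ℝ)) • x ∈ interior B := by
      simpa [Prod.mk_one_one, hypToBC_one] using hx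
    exact ((continuous_hypToBC_diag_smul x).tendsto 1).eventually (mem_interior_iff_mem_nhds.1 h1)
  obtain ⟨s, hsB, hs1⟩ :=
    ((hB.filter_mono nhdsWithin_le_nhds).and (self_mem_nhdsWithin (s := Set.Ioi 1))).exists
  have hs0 : (0 : ℝ) < s := one_pos.trans hs1
  have hmem : (s⁻¹, s⁻¹) ∈ gaugeSet B x :=
    gaugeSet.mem_iff.2 ⟨⟨inv_pos.2 hs0, inv_pos.2 hs0⟩, by simpa using hsB⟩
  have hle := gaugeSet.gaugeD_le _ hmem
  exact ⟨hle.1.trans_lt (inv_lt_one_of_one_lt₀ hs1), hle.2.trans_lt (inv_lt_one_of_one_lt₀ hs1)⟩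

lemma gaugeD_le_one_subset_closure (habs : BCAbsorbing B) (hconv : BCConvex B)
    (hbal : BCBalanced B) : {x : X | gaugeD B x ≤ 1} ⊆ closure B := by
  intro x hx
  have hscaled : ∀ t ∈ Set.Ioo (0 : ℝ) 1, hypToBC (t, t) • x ∈ B := fun t ht => by
    have h1t : 1 < t⁻¹ := one_lt_inv₀ ht.1 |>.2 ht.2
    simpa using (gaugeSet.mem_iff.1 (gaugeSet.mem_of_gaugeD_ltH (r := (t⁻¹, t⁻¹)) habs hconv hbal
      ⟨hx.1.trans_lt h1t, hx.2.trans_lt h1t⟩)).2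
  have hlim : Tendsto (fun t : ℝ => hypToBC (t, t) • x) (𝓝[<] 1) (𝓝 x) := by
    simpa [Prod.mk_one_one, hypToBC_one] using
      ((continuous_hypToBC_diag_smul x).tendsto 1).mono_left nhdsWithin_le_nhds
  exact mem_closure_of_tendsto hlim (mem_of_superset (Ioo_mem_nhdsLT one_pos) hscaled)

end Inclusions

theorem gaugeD_sets_inclusions_general {X : Type*} [AddCommGroup X] [Module BC X]
    [TopologicalSpace X] [ContinuousSMul BC X]
    (B : Set X) (hconv : BCConvex B) (hbal : BCBalanced B) (habs : BCAbsorbing B) :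
    interior B ⊆ {x : X | ltH (gaugeD B x) 1} ∧
    {x : X | ltH (gaugeD B x) 1} ⊆ B ∧
    B ⊆ {x : X | gaugeD B x ≤ 1} ∧
    {x : X | gaugeD B x ≤ 1} ⊆ closure B ∧
    (IsOpen B → B = {x : X | ltH (gaugeD B x) 1}) ∧
    (IsClosed B → B = {x : X | gaugeD B x ≤ 1}) := by
  have hA := gaugeD_ltH_one_subset habs hconv hbal
  have hC := gaugeD_le_one_subset_closure habs hconv hbal
  refine ⟨interior_subset_gaugeD_ltH_one, hA, subset_gaugeD_le_one, hC, fun hopen => ?_,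
    fun hclosed => ?_⟩
  · exact (hopen.interior_eq.symm.subset.trans interior_subset_gaugeD_ltH_one).antisymm hA
  · exact subset_gaugeD_le_one.antisymm (hC.trans hclosed.closure_subset)

theorem gaugeD_sets_inclusions {X : Type*} [AddCommGroup X] [Module BC X]
    [TopologicalSpace X] [T2Space X] [ContinuousAdd X] [ContinuousSMul BC X]
    (B : Set X) (hconv : BCConvex B) (hbal : BCBalanced B) (habs : BCAbsorbing B) :
    interior B ⊆ {x : X | ltH (gaugeD B x) 1} ∧
    {x : X | ltH (gaugeD B x) 1} ⊆ B ∧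
    B ⊆ {x : X | gaugeD B x ≤ 1} ∧
    {x : X | gaugeD B x ≤ 1} ⊆ closure B ∧
    (IsOpen B → B = {x : X | ltH (gaugeD B x) 1}) ∧
    (IsClosed B → B = {x : X | gaugeD B x ≤ 1}) :=
  gaugeD_sets_inclusions_general B hconv hbal habs
end
end
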